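/- Continuity/attainment of the minimax KL: Let $K, L\ge 1$, $\alpha_k>0$, and $p(i,k), p(j,k)$ be probability distributions on $\{0,\dots,L\}$ with strictly positive entries. Define $F(y) = \max\{\sum_k \alpha_k KL(y(k),p(i,k)),\ \sum_k\alpha_k KL(y(k),p(j,k))\}$ over the compact set $\mathcal{P}(\{0,\dots,L\})^K$. Then $F$ attains its minimum, and any minimizer $q$ satisfies $\sum_k\alpha_k KL(q(k),p(i,k)) = \sum_k\alpha_k KL(q(k),p(j,k))$, provided $p(i,k)\ne p(j,k)$ for some $k$. -/

import Mathlib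

/-!
The feasible set is a compact product of simplices and both weighted KL sums are continuous, so
`F` attains its minimum. If at a minimizer `q` one sum `A` exceeded the other sum `B`, then moving
`q` slightly towards the distribution at which `A` vanishes would strictly decrease `A` (by
convexity, since `A q > B q ≥ 0`) while keeping `B` below `A q` (by continuity), contradicting
minimality.
-/

open Real Finset

/-- KL divergence of distributions on `{0,…,L}` (convention `0 log 0 = 0`). -/
noncomputable def KL {L : ℕ} (y p : Fin (L + 1) → ℝ) : ℝ :=
  ∑ ℓ, y ℓ * Real.log (y ℓ / p ℓ)

open Topology

theorem ConvexOn.le_of_isMinOn_max {E : Type*} [AddCommGroup E] [Module ℝ E]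
    [TopologicalSpace E] [ContinuousAdd E] [ContinuousSMul ℝ E] {S : Set E} {f g : E → ℝ}
    (hf : ConvexOn ℝ S f) {p q : E} (hp : p ∈ S) (hq : q ∈ S) (hg : ContinuousWithinAt g S q)
    (hfp : f p ≤ g q) (hmin : IsMinOn (fun y => max (f y) (g y)) S q) : f q ≤ g q := by
  by_contra! hgf
  set z : ℝ → E := fun t => (1 - t) • q + t • p
  have hzS : Set.MapsTo z (Set.Icc 0 1) S := fun t ht =>
    hf.1 hq hp (by linarith [ht.2]) ht.1 (by ring)
  have hz0 : z 0 = q := by simp [z]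
  have hgz : ContinuousWithinAt (g ∘ z) (Set.Icc 0 1) 0 :=
    (hz0 ▸ hg).comp (by fun_prop : Continuous z).continuousWithinAt hzS
  have hev : ∀ᶠ t in 𝓝[Set.Ioo 0 1] (0 : ℝ), g (z t) < f q ∧ t ∈ Set.Ioo 0 1 :=
    ((hgz.mono Set.Ioo_subset_Icc_self).eventually_lt_const (by simpa [hz0] using hgf)).and
      self_mem_nhdsWithin
  have : (𝓝[Set.Ioo 0 1] (0 : ℝ)).NeBot := left_nhdsWithin_Ioo_neBot zero_lt_one
  obtain ⟨t, hgt, ht⟩ := hev.exists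
  have hft : f (z t) < f q :=
    calc f (z t) ≤ (1 - t) * f q + t * f p := hf.2 hq hp (by linarith [ht.2]) ht.1.le (by ring)
      _ < f q := by nlinarith [ht.1]
  have hminz : max (f q) (g q) ≤ max (f (z t)) (g (z t)) :=
    hmin (hzS (Set.Ioo_subset_Icc_self ht))
  exact (max_lt hft hgt).not_ge ((le_max_left _ _).trans hminz)

theorem ConvexOn.univ_pi_sum {ι : Type*} [Fintype ι] {E : ι → Type*}
    [∀ i, AddCommGroup (E i)] [∀ i, Module ℝ (E i)] {s : ∀ i, Set (E i)} {f : ∀ i, E i → ℝ}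
    (hf : ∀ i, ConvexOn ℝ (s i) (f i)) :
    ConvexOn ℝ (Set.univ.pi s) fun x => ∑ i, f i (x i) := by
  refine ⟨convex_pi fun i _ => (hf i).1, fun x hx y hy a b ha hb hab => ?_⟩
  calc ∑ i, f i ((a • x + b • y) i) = ∑ i, f i (a • x i + b • y i) := rfl
    _ ≤ ∑ i, (a • f i (x i) + b • f i (y i)) :=
      sum_le_sum fun i _ => (hf i).2 (hx i trivial) (hy i trivial) ha hb hab
    _ = a • ∑ i, f i (x i) + b • ∑ i, f i (y i) := by
      rw [sum_add_distrib, smul_sum, smul_sum]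

section KLDivergence

variable {L : ℕ} {y p : Fin (L + 1) → ℝ}

theorem KL_eq_sum_mul_log_sub (hp : ∀ ℓ, 0 < p ℓ) :
    KL y p = ∑ ℓ, (y ℓ * log (y ℓ) - y ℓ * log (p ℓ)) := by
  refine sum_congr rfl fun ℓ _ => ?_
  rcases eq_or_ne (y ℓ) 0 with h | h
  · simp [h]
  · rw [log_div h (hp ℓ).ne', mul_sub]

theorem continuous_KL (hp : ∀ ℓ, 0 < p ℓ) : Continuous fun y : Fin (L + 1) → ℝ => KL y p := by
  simp only [KL_eq_sum_mul_log_sub hp]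
  fun_prop

theorem convexOn_KL (hp : ∀ ℓ, 0 < p ℓ) :
    ConvexOn ℝ (Set.Ici 0) fun y : Fin (L + 1) → ℝ => KL y p := by
  simp only [KL_eq_sum_mul_log_sub hp, ← Set.pi_univ_Ici]
  exact ConvexOn.univ_pi_sum fun ℓ =>
    convexOn_mul_log.sub ((LinearMap.mulRight ℝ (log (p ℓ))).concaveOn (convex_Ici 0))

theorem KL_self (hp : ∀ ℓ, 0 < p ℓ) : KL p p = 0 :=
  sum_eq_zero fun ℓ _ => by rw [div_self (hp ℓ).ne', log_one, mul_zero]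

theorem KL_nonneg (hy : y ∈ stdSimplex ℝ (Fin (L + 1))) (hp : ∀ ℓ, 0 < p ℓ)
    (hps : ∑ ℓ, p ℓ = 1) : 0 ≤ KL y p := by
  have hterm (ℓ : Fin (L + 1)) : y ℓ - p ℓ ≤ y ℓ * log (y ℓ / p ℓ) := by
    rcases (hy.1 ℓ).eq_or_lt with h | h
    · simp [← h, (hp ℓ).le]
    · have := one_sub_inv_le_log_of_pos (div_pos h (hp ℓ))
      rw [inv_div] at this
      calc y ℓ - p ℓ = y ℓ * (1 - p ℓ / y ℓ) := by field_simp
        _ ≤ _ := mul_le_mul_of_nonneg_left this h.le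
  calc (0 : ℝ) = ∑ ℓ, (y ℓ - p ℓ) := by rw [sum_sub_distrib, hy.2, hps, sub_self]
    _ ≤ KL y p := sum_le_sum fun ℓ _ => hterm ℓ

end KLDivergence

section WeightedKL

variable {K L : ℕ} {α : Fin K → ℝ}

theorem continuous_weighted_KL {r : Fin K → Fin (L + 1) → ℝ} (hr : ∀ k ℓ, 0 < r k ℓ) :
    Continuous fun y : Fin K → Fin (L + 1) → ℝ => ∑ k, α k * KL (y k) (r k) :=
  continuous_finsetSum _ fun k _ =>
    continuous_const.mul ((continuous_KL (hr k)).comp (continuous_apply k))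

theorem weighted_KL_le_of_isMinOn_max (hα : ∀ k, 0 ≤ α k) {p r : Fin K → Fin (L + 1) → ℝ}
    (hp : ∀ k ℓ, 0 < p k ℓ) (hps : ∀ k, ∑ ℓ, p k ℓ = 1)
    (hr : ∀ k ℓ, 0 < r k ℓ) (hrs : ∀ k, ∑ ℓ, r k ℓ = 1) {q : Fin K → Fin (L + 1) → ℝ}
    (hq : q ∈ Set.univ.pi fun _ => stdSimplex ℝ (Fin (L + 1)))
    (hmin : IsMinOn (fun y => max (∑ k, α k * KL (y k) (p k)) (∑ k, α k * KL (y k) (r k)))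
      (Set.univ.pi fun _ => stdSimplex ℝ (Fin (L + 1))) q) :
    ∑ k, α k * KL (q k) (p k) ≤ ∑ k, α k * KL (q k) (r k) := by
  have hconv : ConvexOn ℝ (Set.univ.pi fun _ => stdSimplex ℝ (Fin (L + 1)))
      fun y => ∑ k, α k * KL (y k) (p k) :=
    (ConvexOn.univ_pi_sum fun k => (convexOn_KL (hp k)).smul (hα k)).subset
      (Set.pi_mono fun _ _ _ hy => hy.1) (convex_pi fun _ _ => convex_stdSimplex ℝ _)
  refine ConvexOn.le_of_isMinOn_max hconv (fun k _ => ⟨fun ℓ => (hp k ℓ).le, hps k⟩) hq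
    (continuous_weighted_KL hr).continuousWithinAt ?_ hmin
  simp only [KL_self (hp _), mul_zero, sum_const_zero]
  exact sum_nonneg fun k _ => mul_nonneg (hα k) (KL_nonneg (hq k trivial) (hr k) (hrs k))

end WeightedKL

theorem minimax_kl_attained_and_equalized_general (K L : ℕ)
    (α : Fin K → ℝ) (hα : ∀ k, 0 < α k)
    (pi pj : Fin K → Fin (L + 1) → ℝ)
    (hpi : ∀ k ℓ, 0 < pi k ℓ) (hpis : ∀ k, ∑ ℓ, pi k ℓ = 1)
    (hpj : ∀ k ℓ, 0 < pj k ℓ) (hpjs : ∀ k, ∑ ℓ, pj k ℓ = 1)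
    (P : Set (Fin K → Fin (L + 1) → ℝ))
    (hP : P = {y | (∀ k ℓ, 0 ≤ y k ℓ) ∧ ∀ k, ∑ ℓ, y k ℓ = 1})
    (F : (Fin K → Fin (L + 1) → ℝ) → ℝ)
    (hF : ∀ y, F y = max (∑ k, α k * KL (y k) (pi k)) (∑ k, α k * KL (y k) (pj k))) :
    (∃ q ∈ P, ∀ y ∈ P, F q ≤ F y) ∧
      ∀ q ∈ P, (∀ y ∈ P, F q ≤ F y) →
        ∑ k, α k * KL (q k) (pi k) = ∑ k, α k * KL (q k) (pj k) := by
  have hP_pi : P = Set.univ.pi fun _ => stdSimplex ℝ (Fin (L + 1)) := by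
    ext y
    simp [hP, stdSimplex, forall_and]
  subst hP_pi
  obtain rfl : F = _ := funext hF
  have hα₀ (k : Fin K) : 0 ≤ α k := (hα k).le
  refine ⟨?_, fun q hq hmin => le_antisymm ?_ ?_⟩
  · exact (isCompact_univ_pi fun _ => isCompact_stdSimplex ℝ _).exists_isMinOn
      ⟨pi, fun k _ => ⟨fun ℓ => (hpi k ℓ).le, hpis k⟩⟩
      ((continuous_weighted_KL hpi).max (continuous_weighted_KL hpj)).continuousOn
  · exact weighted_KL_le_of_isMinOn_max hα₀ hpi hpis hpj hpjs hq hmin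
  · refine weighted_KL_le_of_isMinOn_max hα₀ hpj hpjs hpi hpis hq
      (isMinOn_iff.mpr fun y hy => ?_)
    simpa only [max_comm] using hmin y hy

/-- The minimax functional
`F(y) = max(∑ₖ αₖ KL(y k, pᵢ k), ∑ₖ αₖ KL(y k, pⱼ k))` over the product of
simplices attains its minimum, and any minimizer equalizes the two weighted
KL sums, provided `pᵢ k ≠ pⱼ k` for some `k`. -/
theorem minimax_kl_attained_and_equalized (K L : ℕ) (hK : 1 ≤ K) (hL : 1 ≤ L)
    (α : Fin K → ℝ) (hα : ∀ k, 0 < α k) (hαs : ∑ k, α k = 1)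
    (pi pj : Fin K → Fin (L + 1) → ℝ)
    (hpi : ∀ k ℓ, 0 < pi k ℓ) (hpis : ∀ k, ∑ ℓ, pi k ℓ = 1)
    (hpj : ∀ k ℓ, 0 < pj k ℓ) (hpjs : ∀ k, ∑ ℓ, pj k ℓ = 1)
    (hne : ∃ k, pi k ≠ pj k)
    (P : Set (Fin K → Fin (L + 1) → ℝ))
    (hP : P = {y | (∀ k ℓ, 0 ≤ y k ℓ) ∧ ∀ k, ∑ ℓ, y k ℓ = 1})
    (F : (Fin K → Fin (L + 1) → ℝ) → ℝ)
    (hF : ∀ y, F y = max (∑ k, α k * KL (y k) (pi k)) (∑ k, α k * KL (y k) (pj k))) :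
    (∃ q ∈ P, ∀ y ∈ P, F q ≤ F y) ∧
      ∀ q ∈ P, (∀ y ∈ P, F q ≤ F y) →
        ∑ k, α k * KL (q k) (pi k) = ∑ k, α k * KL (q k) (pj k) :=
  minimax_kl_attained_and_equalized_general K L α hα pi pj hpi hpis hpj hpjs P hP F hF
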